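/- In the polynomial ring ℚ(u)[x], define p⁺(x) = (1-u^3)x^6 - 12(1-u^3)x^5 + 16(1-3u^3)x^4 - 64(3-u^3)x^3 + 1536x^2 - 6144x + 8192 and p⁻(x) = (1+u^3)x^6 - 12(1+u^3)x^5 + 16(1+3u^3)x^4 - 64(3+u^3)x^3 + 1536x^2 - 6144x + 8192. Let φ_x(x) = (x^5 - 8x^4 + 48x^3 - 512x + 1024)/(x^2(x-4)^2). Then in ℚ(u)(x) one has φ_x(x)^3 - 4φ_x(x)^2 - 160φ_x(x) - 1264 - u^6(x^3 - 4x^2 + 16) = p⁺(x)·p⁻(x)·(x^3 - 4x^2 + 16) / (x^6(x-4)^6). -/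

import Mathlib

theorem RatFunc.X_sub_C_ne_zero {K : Type*} [Field K] (c : K) : (X : RatFunc K) - C c ≠ 0 := by
  rw [← algebraMap_X, ← algebraMap_C, ← map_sub]
  exact algebraMap_ne_zero (Polynomial.X_sub_C_ne_zero c)

/-- Factorization of the intersection of the cubic C_u with the degree-5 curve
x₂ = φ_x(x₁), in the rational function field ℚ(u)(x). -/
theorem stmt_2 :
    let u : RatFunc (RatFunc ℚ) := RatFunc.C RatFunc.X
    let x : RatFunc (RatFunc ℚ) := RatFunc.X
    let φx : RatFunc (RatFunc ℚ) := (x^5 - 8*x^4 + 48*x^3 - 512*x + 1024) / (x^2 * (x - 4)^2)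
    let pplus : RatFunc (RatFunc ℚ) :=
      (1 - u^3)*x^6 - 12*(1 - u^3)*x^5 + 16*(1 - 3*u^3)*x^4 - 64*(3 - u^3)*x^3
        + 1536*x^2 - 6144*x + 8192
    let pminus : RatFunc (RatFunc ℚ) :=
      (1 + u^3)*x^6 - 12*(1 + u^3)*x^5 + 16*(1 + 3*u^3)*x^4 - 64*(3 + u^3)*x^3
        + 1536*x^2 - 6144*x + 8192
    φx^3 - 4*φx^2 - 160*φx - 1264 - u^6*(x^3 - 4*x^2 + 16) =
      pplus * pminus * (x^3 - 4*x^2 + 16) / (x^6 * (x - 4)^6) := by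
  intro u x φx pplus pminus
  have hx : x ≠ 0 := RatFunc.X_ne_zero
  have hx4 : x - 4 ≠ 0 := by
    simpa only [map_ofNat] using RatFunc.X_sub_C_ne_zero (4 : RatFunc ℚ)
  simp only [φx, pplus, pminus]
  field_simp
  ring
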